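/- Let $\gamma = (\gamma_0, \ldots, \gamma_{d/2})$ be a nonnegative vector with $\gamma_0 = 1$, and define $g_\ell = \sum_{j=0}^{\ell} b_{\ell,j}\gamma_j$ where $b_{i,j} = \binom{d-2j}{i-j} - \binom{d-2j}{i-j-1}$. Then for all $0 \le \ell \le d/2 - 1$, $g_{\ell+1} > \frac{1}{3} g_\ell$. -/

import Mathlib

/-!
The inequality holds column by column: writing `a_k = C(n,k) - C(n,k-1)`, one has
`a_k (n+1-k) = C(n,k) (n+1-2k)` and `a_{k+1} (k+1) = C(n,k) (n-2k-1)`, and for `2(k+1) ≤ n`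
these give `a_k < 3 a_{k+1}`, i.e. `b_{ℓ,j} < 3 b_{ℓ+1,j}`. Summing against `γ ≥ 0` gives the
claim; it is strict because `γ_0 = 1`, and the extra diagonal term `b_{ℓ+1,ℓ+1} γ_{ℓ+1} = γ_{ℓ+1}`
of `g_{ℓ+1}` is nonnegative.
-/

/-- `bcoef d i j` is `C(d-2j, i-j) - C(d-2j, i-j-1)` (with the convention
`C(n,-1) = 0`), written as `2*C(d-2j, i-j) - C(d-2j+1, i-j)` using Pascal's rule
so that the `i = j` case is handled correctly over `ℕ`-indices. -/
noncomputable def bcoef (d i j : ℕ) : ℝ :=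
  2 * ((d - 2*j).choose (i - j) : ℝ) - ((d - 2*j + 1).choose (i - j) : ℝ)

/-- `C(n,k) - C(n,k-1)`, with `C(n,-1) = 0`, rewritten by Pascal's rule. -/
noncomputable def ballotDiff (n k : ℕ) : ℝ :=
  2 * (n.choose k : ℝ) - (n + 1).choose k

theorem bcoef_eq_ballotDiff (d i j : ℕ) : bcoef d i j = ballotDiff (d - 2 * j) (i - j) := rfl

theorem ballotDiff_mul_succ_sub (n k : ℕ) (hk : k ≤ n + 1) :
    ballotDiff n k * (n + 1 - k) = n.choose k * (n + 1 - 2 * k) := by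
  have h := Nat.choose_mul_succ_eq n k
  rw [← Nat.cast_inj (R := ℝ)] at h
  push_cast [hk] at h
  rw [ballotDiff]
  linear_combination h

theorem ballotDiff_succ_mul_succ (n k : ℕ) (hk : k < n) :
    ballotDiff n (k + 1) * (k + 1) = n.choose k * (n - 2 * k - 1) := by
  have hnk : (n : ℝ) - k ≠ 0 := by
    rw [sub_ne_zero]
    exact_mod_cast hk.ne'
  have hrow := ballotDiff_mul_succ_sub n (k + 1) (by omega)
  have hstep := Nat.choose_succ_right_eq n k
  rw [← Nat.cast_inj (R := ℝ)] at hstep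
  push_cast [hk.le] at hstep hrow
  refine mul_right_cancel₀ hnk ?_
  linear_combination (k + 1 : ℝ) * hrow + ((n : ℝ) - 2 * k - 1) * hstep

theorem ballotDiff_div_three_lt_succ {n k : ℕ} (h : 2 * (k + 1) ≤ n) :
    ballotDiff n k / 3 < ballotDiff n (k + 1) := by
  have ha := ballotDiff_mul_succ_sub n k (by omega)
  have hb := ballotDiff_succ_mul_succ n k (by omega)
  have hc : (0 : ℝ) < n.choose k := by exact_mod_cast Nat.choose_pos (by omega)
  have hn : (2 * (k + 1) : ℝ) ≤ n := by exact_mod_cast h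
  have hw : (0 : ℝ) < (n + 1 - k) * (k + 1) := by
    have : (k : ℝ) < n + 1 := by linarith
    nlinarith
  have hpoly : ((n : ℝ) + 1 - 2 * k) * (k + 1) < (n - 2 * k - 1) * 3 * (n + 1 - k) := by
    nlinarith [(k.cast_nonneg : (0 : ℝ) ≤ k)]
  rw [div_lt_iff₀ three_pos, ← mul_lt_mul_iff_of_pos_right hw]
  calc ballotDiff n k * ((n + 1 - k) * (k + 1)) = n.choose k * (n + 1 - 2 * k) * (k + 1) := by
        rw [← mul_assoc, ha]
    _ < n.choose k * ((n - 2 * k - 1) * 3 * (n + 1 - k)) := by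
        rw [mul_assoc]
        exact mul_lt_mul_of_pos_left hpoly hc
    _ = ballotDiff n (k + 1) * 3 * ((n + 1 - k) * (k + 1)) := by
        linear_combination (-3 * (n + 1 - k) : ℝ) * hb

theorem bcoef_self (d i : ℕ) : bcoef d i i = 1 := by
  simp only [bcoef, Nat.sub_self, Nat.choose_zero_right]
  norm_num

theorem bcoef_div_three_lt_succ {d ℓ j : ℕ} (hj : j ≤ ℓ) (hℓ : 2 * (ℓ + 1) ≤ d) :
    bcoef d ℓ j / 3 < bcoef d (ℓ + 1) j := by
  rw [bcoef_eq_ballotDiff, bcoef_eq_ballotDiff, show ℓ + 1 - j = ℓ - j + 1 by omega]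
  exact ballotDiff_div_three_lt_succ (by omega)

theorem stmt_2_general (d : ℕ) (hd : 2 ≤ d) (γ : ℕ → ℝ)
    (hγ0 : γ 0 = 1) (hγnn : ∀ j ≤ d / 2, 0 ≤ γ j)
    (g : ℕ → ℝ)
    (hg : ∀ ℓ ≤ d / 2, g ℓ = ∑ j ∈ Finset.range (ℓ + 1), bcoef d ℓ j * γ j) :
    ∀ ℓ ≤ d / 2 - 1, g (ℓ + 1) > (1 / 3) * g ℓ := by
  intro ℓ hℓ
  have hℓd : 2 * (ℓ + 1) ≤ d := by omega
  have hcols : (1 / 3) * ∑ j ∈ Finset.range (ℓ + 1), bcoef d ℓ j * γ j <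
      ∑ j ∈ Finset.range (ℓ + 1), bcoef d (ℓ + 1) j * γ j := by
    rw [Finset.mul_sum]
    refine Finset.sum_lt_sum (fun j hj => ?_) ⟨0, by simp, ?_⟩
    · have hjℓ : j ≤ ℓ := Nat.lt_succ_iff.mp (Finset.mem_range.mp hj)
      rw [← mul_assoc, one_div_mul_eq_div]
      exact mul_le_mul_of_nonneg_right (bcoef_div_three_lt_succ hjℓ hℓd).le (hγnn j (by omega))
    · rw [hγ0, mul_one, mul_one, one_div_mul_eq_div]
      exact bcoef_div_three_lt_succ (Nat.zero_le ℓ) hℓd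
  have hdiag : 0 ≤ bcoef d (ℓ + 1) (ℓ + 1) * γ (ℓ + 1) := by
    rw [bcoef_self, one_mul]
    exact hγnn (ℓ + 1) (by omega)
  rw [hg ℓ (by omega), hg (ℓ + 1) (by omega), Finset.sum_range_succ]
  linarith

/-- Let `γ = (γ_0, …, γ_{d/2})` be a nonnegative vector with `γ_0 = 1` and
`g_ℓ = ∑_{j ≤ ℓ} b_{ℓ,j} γ_j`. Then `g_{ℓ+1} > g_ℓ / 3` for all `0 ≤ ℓ ≤ d/2 - 1`. -/
theorem stmt_2 (d : ℕ) (hde : Even d) (hd : 2 ≤ d) (γ : ℕ → ℝ)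
    (hγ0 : γ 0 = 1) (hγnn : ∀ j ≤ d / 2, 0 ≤ γ j)
    (g : ℕ → ℝ)
    (hg : ∀ ℓ ≤ d / 2, g ℓ = ∑ j ∈ Finset.range (ℓ + 1), bcoef d ℓ j * γ j) :
    ∀ ℓ ≤ d / 2 - 1, g (ℓ + 1) > (1 / 3) * g ℓ :=
  stmt_2_general d hd γ hγ0 hγnn g hg
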